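/- Let R be a ring, and let A, C be left R-modules with C pure injective. Let f : A → C be a monomorphism such that f^+ : C^+ → A^+ is a precover of A^+ with respect to the class of cotorsion right R-modules. Then f is a pure injective preenvelope of A. -/

import Mathlib

universe u

/-! Common definitions: character modules, purity, pure injectivity. -/

open MulOpposite


/-- The character group `M⁺ = Hom_ℤ(M, ℚ/ℤ)`. -/
def CharMod (M : Type u) [AddCommGroup M] : Type u := M →+ AddCircle (1 : ℚ)

instance (M : Type u) [AddCommGroup M] : AddCommGroup (CharMod M) :=
  inferInstanceAs (AddCommGroup (M →+ AddCircle (1 : ℚ)))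

instance (M : Type u) [AddCommGroup M] : FunLike (CharMod M) M (AddCircle (1 : ℚ)) :=
  inferInstanceAs (FunLike (M →+ AddCircle (1 : ℚ)) M (AddCircle (1 : ℚ)))

instance (M : Type u) [AddCommGroup M] :
    AddMonoidHomClass (CharMod M) M (AddCircle (1 : ℚ)) :=
  inferInstanceAs (AddMonoidHomClass (M →+ AddCircle (1 : ℚ)) M (AddCircle (1 : ℚ)))

/-- If `M` is a left `R`-module, `M⁺` is a right `R`-module via `(c • r) m = c (r • m)`. -/
instance CharMod.moduleOp (R : Type v) [Ring R] (M : Type u) [AddCommGroup M] [Module R M] :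
    Module Rᵐᵒᵖ (CharMod M) where
  smul r c := (c : M →+ AddCircle (1 : ℚ)).comp (DistribMulAction.toAddMonoidHom M r.unop)
  one_smul c := AddMonoidHom.ext fun m => congrArg c (one_smul R m)
  mul_smul r s c := AddMonoidHom.ext fun m => congrArg c (mul_smul s.unop r.unop m)
  smul_zero r := rfl
  smul_add r c d := rfl
  add_smul r s c := AddMonoidHom.ext fun m => by
    show c ((r.unop + s.unop) • m) = c (r.unop • m) + c (s.unop • m)
    rw [add_smul, map_add]
  zero_smul c := AddMonoidHom.ext fun m => by
    show c ((0 : R) • m) = 0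
    rw [zero_smul, map_zero]

@[simp] lemma CharMod.op_smul_apply {R : Type v} [Ring R] {M : Type u} [AddCommGroup M]
    [Module R M] (r : Rᵐᵒᵖ) (c : CharMod M) (m : M) : (r • c) m = c (r.unop • m) := rfl

/-- If `N` is a right `R`-module, `N⁺` is a left `R`-module via `(r • c) n = c (n • r)`. -/
instance CharMod.moduleUnop (R : Type v) [Ring R] (N : Type u) [AddCommGroup N] [Module Rᵐᵒᵖ N] :
    Module R (CharMod N) where
  smul r c := (c : N →+ AddCircle (1 : ℚ)).comp (DistribMulAction.toAddMonoidHom N (op r))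
  one_smul c := AddMonoidHom.ext fun n => congrArg c (one_smul Rᵐᵒᵖ n)
  mul_smul r s c := AddMonoidHom.ext fun n => by
    show c ((op (r * s)) • n) = c (op s • op r • n)
    rw [← mul_smul]; rfl
  smul_zero r := rfl
  smul_add r c d := rfl
  add_smul r s c := AddMonoidHom.ext fun n => by
    show c ((op (r + s)) • n) = c (op r • n) + c (op s • n)
    rw [show op (r + s) = op r + op s from rfl, add_smul, map_add]
  zero_smul c := AddMonoidHom.ext fun n => by
    show c ((op (0 : R)) • n) = 0
    rw [show op (0 : R) = (0 : Rᵐᵒᵖ) from rfl, zero_smul, map_zero]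

@[simp] lemma CharMod.unop_smul_apply {R : Type v} [Ring R] {N : Type u} [AddCommGroup N]
    [Module Rᵐᵒᵖ N] (r : R) (c : CharMod N) (n : N) : (r • c) n = c (op r • n) := rfl

/-- The dual `f⁺ : C⁺ → A⁺` of a map `f : A → C` of left `R`-modules. -/
def charDual {R : Type v} [Ring R] {A C : Type u} [AddCommGroup A] [Module R A]
    [AddCommGroup C] [Module R C] (f : A →ₗ[R] C) : CharMod C →ₗ[Rᵐᵒᵖ] CharMod A where
  toFun c := (c : C →+ AddCircle (1 : ℚ)).comp f.toAddMonoidHom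
  map_add' _ _ := rfl
  map_smul' r c := AddMonoidHom.ext fun a => (congrArg c (f.map_smul r.unop a)).symm

/-- The canonical evaluation map `σ_M : M → M⁺⁺`. -/
def charEval (R : Type v) [Ring R] (M : Type u) [AddCommGroup M] [Module R M] :
    M →ₗ[R] CharMod (CharMod M) where
  toFun m :=
    { toFun := fun c => c m
      map_zero' := rfl
      map_add' := fun _ _ => rfl }
  map_add' m m' := AddMonoidHom.ext fun c => c.map_add m m'
  map_smul' r m := AddMonoidHom.ext fun c => rfl

/-- A linear map `i : M → N` is a pure monomorphism if it is injective and every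
map from a finitely presented module to `N ⧸ im i` lifts to `N`, i.e. the short exact
sequence `0 → M → N → N ⧸ im i → 0` remains exact after applying `Hom(F, -)` for all
finitely presented `F`. -/
def IsPureMono {R : Type v} [Ring R] {M N : Type u} [AddCommGroup M] [Module R M]
    [AddCommGroup N] [Module R N] (i : M →ₗ[R] N) : Prop :=
  Function.Injective i ∧
    ∀ (F : Type u) [AddCommGroup F] [Module R F], Module.FinitePresentation R F →
      ∀ g : F →ₗ[R] (N ⧸ LinearMap.range i),
        ∃ h : F →ₗ[R] N, (LinearMap.range i).mkQ.comp h = g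

/-- A module `E` is pure injective if every map to `E` extends along pure monomorphisms. -/
def IsPureInjective (R : Type v) [Ring R] (E : Type u) [AddCommGroup E] [Module R E] : Prop :=
  ∀ (M N : Type u) [AddCommGroup M] [Module R M] [AddCommGroup N] [Module R N]
    (i : M →ₗ[R] N), IsPureMono i →
      ∀ f : M →ₗ[R] E, ∃ g : N →ₗ[R] E, g.comp i = f

/-- A module `M` over an arbitrary ring `R` is flat iff every homomorphism from a finitely
presented module to `M` factors through a finitely generated free module (Lazard-Govorov);
we use this tensor-free characterization as the definition of flatness. -/
def IsFlat (R : Type v) [Ring R] (M : Type u) [AddCommGroup M] [Module R M] : Prop :=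
  ∀ (F : Type u) [AddCommGroup F] [Module R F], Module.FinitePresentation R F →
    ∀ g : F →ₗ[R] M, ∃ (n : ℕ) (p : F →ₗ[R] (Fin n → R)) (q : (Fin n → R) →ₗ[R] M),
      q.comp p = g

/-- A module `N` is cotorsion if `Ext¹(F, N) = 0` for every flat module `F`, equivalently
every short exact sequence `0 → N → B → F → 0` with `F` flat splits. -/
def IsCotorsion (R : Type v) [Ring R] (N : Type u) [AddCommGroup N] [Module R N] : Prop :=
  ∀ (B F : Type u) [AddCommGroup B] [Module R B] [AddCommGroup F] [Module R F],
    IsFlat R F → ∀ (i : N →ₗ[R] B) (p : B →ₗ[R] F), Function.Injective i →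
      Function.Surjective p → LinearMap.range i = LinearMap.ker p →
      ∃ r : B →ₗ[R] N, r.comp i = LinearMap.id

/-!
Applying the precover property of `f⁺` to the identity of `A⁺` splits `f⁺`; this is allowed
because character modules are pure injective, hence cotorsion. A splitting `σ` of `f⁺` lets every
finite linear system with constants in `A` that is solvable in `C` be solved in `A`: a character
of `Aᵖ` that kills every value of the system but not its constants gives, through `σ`, a character
of `Cᵖ` with the same properties, contradicting solvability in `C`. A map with this property is a pure
monomorphism, so pure injectivity of `X` extends any `g : A → X` along `f`.

That `A⁺ = Hom(A, ℚ/ℤ)` is pure injective is algebraic compactness: a system of equations over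
`A⁺` prescribes values of a character on a free abelian group, and since `ℚ/ℤ` is injective this is
solvable as soon as every finite part is. An extension of `φ : M → A⁺` along a pure monomorphism
`M → N` is the solution of such a system whose finite parts are solvable by purity.
-/

open MulOpposite Finsupp

theorem exists_character_of_forall_finset {G E : Type*} [AddCommGroup G] (u : E → G)
    (c : E → AddCircle (1 : ℚ))
    (h : ∀ F : Finset E, ∃ ψ : G →+ AddCircle (1 : ℚ), ∀ e ∈ F, ψ (u e) = c e) :
    ∃ ψ : G →+ AddCircle (1 : ℚ), ∀ e, ψ (u e) = c e := by
  let L := (linearCombination ℤ u).toAddMonoidHom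
  let Φ := (linearCombination ℤ c).toAddMonoidHom
  have hker : L.ker ≤ Φ.ker := fun x hx => by
    obtain ⟨ψ, hψ⟩ := h x.support
    have : Φ x = ψ (L x) := by
      simp only [L, Φ, LinearMap.toAddMonoidHom_coe, linearCombination_apply, map_finsuppSum,
        map_zsmul]
      exact Finsupp.sum_congr fun e he => by rw [hψ e he]
    rw [AddMonoidHom.mem_ker, this, AddMonoidHom.mem_ker.mp hx, map_zero]
  obtain ⟨ψ, hψ⟩ := (Module.Baer.of_divisible _).extension_property_addMonoidHom
    (QuotientAddGroup.kerLift L) (QuotientAddGroup.kerLift_injective L)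
    (QuotientAddGroup.lift L.ker Φ hker)
  refine ⟨ψ, fun e => ?_⟩
  have := DFunLike.congr_fun hψ (QuotientAddGroup.mk (single e 1))
  simpa [L, Φ] using this

namespace CharMod

variable {R : Type*} [Ring R] {A : Type u} [AddCommGroup A] [Module R A]

def eval (a : A) : CharMod A →+ AddCircle (1 : ℚ) where
  toFun χ := χ a
  map_zero' := rfl
  map_add' _ _ := rfl

lemma linearCombination_apply {K : Type*} (x : K → CharMod A) (l : K →₀ Rᵐᵒᵖ) (a : A) :
    linearCombination Rᵐᵒᵖ x l a = l.sum fun k r => x k (r.unop • a) := by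
  change eval a _ = _
  rw [Finsupp.linearCombination_apply, map_finsuppSum]
  rfl

theorem exists_solution_of_forall_finset {K E : Type*} (s : E → K →₀ Rᵐᵒᵖ) (b : E → CharMod A)
    (h : ∀ F : Finset E, ∃ x : K → CharMod A, ∀ e ∈ F, linearCombination Rᵐᵒᵖ x (s e) = b e) :
    ∃ x : K → CharMod A, ∀ e, linearCombination Rᵐᵒᵖ x (s e) = b e := by
  classical
  -- `x : K → A⁺` is a function on `K × A`, i.e. a character of `K × A →₀ ℤ`; the `inl`
  -- constraints make it additive in `A`, the `inr` constraints are the equations.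
  let u : (K × A × A) ⊕ (E × A) → (K × A →₀ ℤ) := Sum.elim
    (fun ⟨k, a, a'⟩ => single (k, a + a') 1 - single (k, a) 1 - single (k, a') 1)
    (fun ⟨e, a⟩ => (s e).sum fun k r => single (k, r.unop • a) 1)
  let c : (K × A × A) ⊕ (E × A) → AddCircle (1 : ℚ) := Sum.elim 0 fun ⟨e, a⟩ => b e a
  obtain ⟨ψ, hψ⟩ := exists_character_of_forall_finset u c fun F' => by
    obtain ⟨x, hx⟩ := h (F'.toRight.image Prod.fst)
    refine ⟨(linearCombination ℤ fun p : K × A => x p.1 p.2).toAddMonoidHom, ?_⟩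
    rintro (⟨k, a, a'⟩ | ⟨e, a⟩) he
    · simp [u, c]
    · have := hx e (Finset.mem_image_of_mem _ (Finset.mem_toRight.mpr he))
      simp [u, c, ← this, linearCombination_apply, map_finsuppSum]
  let x : K → CharMod A := fun k =>
    { toFun := fun a => ψ (single (k, a) 1)
      map_zero' := by simpa [u, c] using hψ (.inl (k, 0, 0))
      map_add' := fun a a' => by
        have := hψ (.inl (k, a, a'))
        simp only [u, c, Sum.elim_inl, map_sub, Pi.zero_apply] at this
        rw [← sub_eq_zero, sub_add_eq_sub_sub, this] }
  refine ⟨x, fun e => DFunLike.ext _ _ fun a => ?_⟩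
  rw [linearCombination_apply]
  change ((s e).sum fun k r => ψ (single (k, r.unop • a) 1)) = _
  simpa [u, c, map_finsuppSum] using hψ (.inr (e, a))

lemma sum_apply_sum_smul {X : Type u} [AddCommGroup X] [Module R X] {p q : ℕ}
    (χ : Fin p → CharMod X) (t : Fin p → Fin q → R) (x : Fin q → X) :
    ∑ j, χ j (∑ k, t j k • x k) = ∑ k, (∑ j, op (t j k) • χ j) (x k) := by
  change _ = ∑ k, CharMod.eval (x k) _
  simp only [map_sum]
  exact Finset.sum_comm

end CharMod

lemma LinearMap.apply_eq_sum_smul_single {S P : Type*} [Ring S] [AddCommGroup P] [Module S P]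
    {q : ℕ} (δ : (Fin q → S) →ₗ[S] P) (v : Fin q → S) : δ v = ∑ k, v k • δ (Pi.single k 1) := by
  rw [LinearMap.pi_apply_eq_sum_univ δ v]
  congr! with k
  simp [Pi.single_apply, eq_comm]

section Solvability

variable {S : Type u} [Ring S] {M N : Type u} [AddCommGroup M] [Module S M]
  [AddCommGroup N] [Module S N]

def ReflectsSolvability (i : M →ₗ[S] N) : Prop :=
  ∀ (p q : ℕ) (s : Fin p → Fin q → S) (m : Fin p → M) (y : Fin q → N),
    (∀ j, ∑ k, s j k • y k = i (m j)) → ∃ z : Fin q → M, ∀ j, ∑ k, s j k • z k = m j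

theorem IsPureMono.reflectsSolvability {i : M →ₗ[S] N} (hi : IsPureMono i) :
    ReflectsSolvability i := by
  intro p q s m y hy
  let U := Submodule.span S (Set.range s)
  let φ := Fintype.linearCombination S y
  have hU : U ≤ LinearMap.ker ((LinearMap.range i).mkQ ∘ₗ φ) := by
    refine Submodule.span_le.mpr ?_
    rintro _ ⟨j, rfl⟩
    simp [φ, Fintype.linearCombination_apply, hy]
  have : Module.FinitePresentation S ((Fin q → S) ⧸ U) :=
    Module.finitePresentation_of_surjective U.mkQ U.mkQ_surjective
      (by rw [Submodule.ker_mkQ]; exact Submodule.fg_span (Set.finite_range s))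
  obtain ⟨h, hh⟩ := hi.2 _ this (U.liftQ _ hU)
  let δ := φ - h ∘ₗ U.mkQ
  have hδ : ∀ v, δ v ∈ LinearMap.range i := fun v => by
    rw [← Submodule.ker_mkQ (LinearMap.range i), LinearMap.mem_ker]
    have := LinearMap.congr_fun hh (U.mkQ v)
    simp only [LinearMap.comp_apply, Submodule.mkQ_apply, Submodule.liftQ_apply] at this
    simp [δ, this]
  choose z hz using fun k => hδ (Pi.single k 1)
  refine ⟨z, fun j => hi.1 ?_⟩
  have hsj : U.mkQ (s j) = 0 := by
    simpa using Submodule.subset_span (Set.mem_range_self j)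
  calc i (∑ k, s j k • z k) = δ (s j) := by simp [hz, δ.apply_eq_sum_smul_single (s j)]
    _ = i (m j) := by simp [δ, hsj, φ, Fintype.linearCombination_apply, hy]

theorem ReflectsSolvability.exists_linearCombination_eq {i : M →ₗ[S] N}
    (hi : ReflectsSolvability i) {J K : Type*} [Finite J] (s : J → K →₀ S) (m : J → M)
    (y : K → N) (hy : ∀ j, linearCombination S y (s j) = i (m j)) :
    ∃ z : K → M, ∀ j, linearCombination S z (s j) = m j := by
  classical
  have := Fintype.ofFinite J
  let T : Finset K := Finset.univ.biUnion fun j => (s j).support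
  let eJ := Fintype.equivFin J
  let eT := T.equivFin
  have hsum : ∀ {P : Type u} [AddCommGroup P] [Module S P] (v : K → P) (j : J),
      linearCombination S v (s j) = ∑ k, s j (eT.symm k) • v (eT.symm k) := by
    intro P _ _ v j
    rw [linearCombination_apply, Finsupp.sum_of_support_subset _
      (Finset.subset_biUnion_of_mem (fun j => (s j).support) (Finset.mem_univ j)) _ (by simp),
      ← Finset.sum_coe_sort T]
    exact (Equiv.sum_comp eT.symm _).symm
  obtain ⟨z, hz⟩ := hi _ _ (fun j k => s (eJ.symm j) (eT.symm k)) (m ∘ eJ.symm)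
    (fun k => y (eT.symm k)) fun j => by rw [Function.comp_apply, ← hy, hsum]
  refine ⟨fun k => if hk : k ∈ T then z (eT ⟨k, hk⟩) else 0, fun j => ?_⟩
  rw [hsum]
  simpa using hz (eJ j)

theorem ReflectsSolvability.isPureMono {i : M →ₗ[S] N} (hi : ReflectsSolvability i) :
    IsPureMono i := by
  refine ⟨fun m m' hm => ?_, fun G _ _ hG g => ?_⟩
  · -- `0 = m - m'` is a system in no unknowns
    obtain ⟨z, hz⟩ := hi 1 0 (fun _ => Fin.elim0) (fun _ => m - m') Fin.elim0
      fun _ => by simp [hm]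
    simpa [sub_eq_zero, eq_comm] using hz 0
  obtain ⟨n, p, π, κ, hπ, hexact⟩ := Module.FinitePresentation.exists_fin' S G
  choose c hc using fun k => (LinearMap.range i).mkQ_surjective (g (π (Pi.single k 1)))
  have hrel : ∀ j, ∑ k, κ (Pi.single j 1) k • c k ∈ LinearMap.range i := fun j => by
    rw [← Submodule.ker_mkQ (LinearMap.range i), LinearMap.mem_ker]
    simp only [map_sum, map_smul, hc]
    have := (g ∘ₗ π).apply_eq_sum_smul_single (κ (Pi.single j 1))
    simp only [LinearMap.comp_apply, hexact.apply_apply_eq_zero, map_zero] at this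
    exact this.symm
  choose a ha using hrel
  obtain ⟨z, hz⟩ := hi p n (fun j => κ (Pi.single j 1)) a c fun j => (ha j).symm
  let h₀ := Fintype.linearCombination S (c - i ∘ z)
  have hκ : LinearMap.range κ ≤ LinearMap.ker h₀ := by
    rw [LinearMap.range_le_ker_iff]
    ext j
    simp only [LinearMap.comp_apply, LinearMap.coe_single, LinearMap.zero_apply, h₀,
      Fintype.linearCombination_apply, Pi.sub_apply, Function.comp_apply, smul_sub,
      Finset.sum_sub_distrib]
    rw [sub_eq_zero, ← ha, ← hz j, map_sum]
    simp only [map_smul]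
  refine ⟨(LinearMap.range κ).liftQ h₀ hκ ∘ₗ (hexact.linearEquivOfSurjective hπ).symm, ?_⟩
  have : (LinearMap.range i).mkQ ∘ₗ h₀ = g ∘ₗ π := by
    ext k
    simp [h₀, ← hc, (Submodule.Quotient.mk_eq_zero _).mpr (LinearMap.mem_range_self i (z k))]
  ext x
  obtain ⟨v, rfl⟩ := hπ x
  simpa using LinearMap.congr_fun this v

end Solvability

theorem CharMod.isPureInjective {R : Type u} [Ring R] {A : Type u} [AddCommGroup A]
    [Module R A] : IsPureInjective Rᵐᵒᵖ (CharMod A) := by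
  classical
  intro M N _ _ _ _ i hi φ
  -- An extension of `φ` is a solution `x : N → A⁺` of `x (n + n') = x n + x n'`,
  -- `x (r • n) = r • x n` and `x (i m) = φ m`; by purity each finite part of this system
  -- is solved by some `φ ∘ z`.
  let s : (N × N) ⊕ (Rᵐᵒᵖ × N) ⊕ M → N →₀ Rᵐᵒᵖ := Sum.elim
    (fun ⟨n, n'⟩ => single (n + n') 1 - single n 1 - single n' 1)
    (Sum.elim (fun ⟨r, n⟩ => single (r • n) 1 - single n r) fun m => single (i m) 1)
  let rhs : (N × N) ⊕ (Rᵐᵒᵖ × N) ⊕ M → M := Sum.elim 0 (Sum.elim 0 id)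
  obtain ⟨x, hx⟩ := CharMod.exists_solution_of_forall_finset s (φ ∘ rhs) fun F => by
    obtain ⟨z, hz⟩ := hi.reflectsSolvability.exists_linearCombination_eq
      (fun e : F => s e) (fun e => rhs e) id (by rintro ⟨(_ | _ | _), _⟩ <;> simp [s, rhs])
    exact ⟨φ ∘ z, fun e he => by
      rw [Function.comp_apply, ← hz ⟨e, he⟩, apply_linearCombination]⟩
  refine ⟨{ toFun := x, map_add' := fun n n' => ?_, map_smul' := fun r n => ?_ }, ?_⟩
  · simpa [s, rhs, sub_eq_zero, sub_eq_iff_eq_add'] using hx (.inl (n, n'))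
  · simpa [s, rhs, sub_eq_zero] using hx (.inr (.inl (r, n)))
  · ext m : 1
    simpa [s, rhs] using hx (.inr (.inr m))

section Cotorsion
variable {S : Type u} [Ring S]

theorem isPureMono_of_isFlat {M B F : Type u} [AddCommGroup M] [Module S M]
    [AddCommGroup B] [Module S B] [AddCommGroup F] [Module S F] (hF : IsFlat S F)
    {i : M →ₗ[S] B} {p : B →ₗ[S] F} (hi : Function.Injective i) (hp : Function.Surjective p)
    (hexact : LinearMap.range i = LinearMap.ker p) : IsPureMono i := by
  refine ⟨hi, fun G _ _ hG g => ?_⟩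
  let e : (B ⧸ LinearMap.range i) ≃ₗ[S] F :=
    (Submodule.quotEquivOfEq _ _ hexact).trans (p.quotKerEquivOfSurjective hp)
  obtain ⟨n, a, b, hab⟩ := hF G hG (e.toLinearMap ∘ₗ g)
  obtain ⟨b', hb'⟩ := Module.projective_lifting_property p b hp
  refine ⟨b' ∘ₗ a, LinearMap.ext fun x => e.injective ?_⟩
  change p (b' (a x)) = e (g x)
  rw [← LinearMap.comp_apply p, hb', ← LinearMap.comp_apply b, hab]
  rfl

theorem IsPureInjective.isCotorsion {E : Type u} [AddCommGroup E] [Module S E]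
    (hE : IsPureInjective S E) : IsCotorsion S E :=
  fun _ _ _ _ _ _ hF i _ hi hp hexact =>
    hE _ _ i (isPureMono_of_isFlat hF hi hp hexact) LinearMap.id

end Cotorsion

theorem reflectsSolvability_of_charDual_comp_eq_id {R : Type u} [Ring R] {A C : Type u}
    [AddCommGroup A] [Module R A] [AddCommGroup C] [Module R C] {f : A →ₗ[R] C}
    {σ : CharMod A →ₗ[Rᵐᵒᵖ] CharMod C} (hσ : charDual f ∘ₗ σ = LinearMap.id) :
    ReflectsSolvability f := by
  intro p q t a c hc
  let D : (Fin q → A) →+ (Fin p → A) :=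
    { toFun := fun z j => ∑ k, t j k • z k
      map_zero' := by ext; simp
      map_add' := fun z z' => by ext j; simp [Finset.sum_add_distrib] }
  suffices (QuotientAddGroup.mk a : (Fin p → A) ⧸ D.range) = 0 by
    obtain ⟨z, hz⟩ := (QuotientAddGroup.eq_zero_iff a).mp this
    exact ⟨z, fun j => congrFun hz j⟩
  refine CharacterModule.eq_zero_of_character_apply fun ψ' => ?_
  let ψ := (ψ' : _ →+ AddCircle (1 : ℚ)).comp (QuotientAddGroup.mk' D.range)
  let χ : Fin p → CharMod A := fun j => ψ.comp (AddMonoidHom.single (fun _ => A) j)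
  have hψ : ∀ v, ψ v = ∑ j, χ j (v j) := fun v => by
    conv_lhs => rw [← Finset.univ_sum_single v]
    rw [map_sum]
    rfl
  have hrel : ∀ k, ∑ j, op (t j k) • σ (χ j) = 0 := fun k => by
    suffices h : ∑ j, op (t j k) • χ j = 0 by
      calc ∑ j, op (t j k) • σ (χ j) = σ (∑ j, op (t j k) • χ j) := by
            simp only [map_sum, map_smul]
        _ = 0 := by rw [h, map_zero]
    refine DFunLike.ext _ _ fun x => ?_
    have hD : D (Pi.single k x) = fun j => t j k • x := by
      ext j
      simp [D, Pi.single_apply]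
    calc (∑ j, op (t j k) • χ j) x = ψ (D (Pi.single k x)) := by
          rw [hD, hψ]
          change CharMod.eval x _ = _
          rw [map_sum]
          rfl
      _ = 0 := by
          change ψ' (QuotientAddGroup.mk (D (Pi.single k x))) = 0
          rw [(QuotientAddGroup.eq_zero_iff (D (Pi.single k x))).mpr (D.mem_range.mpr ⟨_, rfl⟩),
            map_zero]
  have hσf : ∀ χ : CharMod A, ∀ x, σ χ (f x) = χ x := fun χ x =>
    DFunLike.congr_fun (LinearMap.congr_fun hσ χ) x
  change ψ a = 0
  calc ψ a = ∑ j, σ (χ j) (∑ k, t j k • c k) := by simp [hψ, hc, hσf]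
    _ = 0 := by
      rw [CharMod.sum_apply_sum_smul]
      simp only [hrel]
      exact Finset.sum_eq_zero fun _ _ => rfl

theorem stmt7_general {R : Type u} [Ring R] {A C : Type u}
    [AddCommGroup A] [Module R A] [AddCommGroup C] [Module R C]
    (f : A →ₗ[R] C)
    -- `f⁺` is a precover w.r.t. the class of cotorsion right `R`-modules:
    (hfact : ∀ (Y : Type u) [AddCommGroup Y] [Module Rᵐᵒᵖ Y], IsCotorsion Rᵐᵒᵖ Y →
      ∀ g : Y →ₗ[Rᵐᵒᵖ] CharMod A, ∃ h : Y →ₗ[Rᵐᵒᵖ] CharMod C, (charDual f).comp h = g) :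
    -- `f` is a pure injective preenvelope of `A`:
    ∀ (X : Type u) [AddCommGroup X] [Module R X], IsPureInjective R X →
      ∀ g : A →ₗ[R] X, ∃ h : C →ₗ[R] X, h.comp f = g := by
  intro X _ _ hX g
  obtain ⟨σ, hσ⟩ := hfact (CharMod A) CharMod.isPureInjective.isCotorsion LinearMap.id
  exact hX A C f (reflectsSolvability_of_charDual_comp_eq_id hσ).isPureMono g

/-- **Corollary 3.3 (cotorsion version).** If `f : A ↪ C` is a monomorphism of left
`R`-modules with `C` pure injective, and `f⁺ : C⁺ → A⁺` is a precover of `A⁺` with respect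
to the class of cotorsion right `R`-modules, then `f` is a pure injective preenvelope
of `A`. -/
theorem stmt7 {R : Type u} [Ring R] {A C : Type u}
    [AddCommGroup A] [Module R A] [AddCommGroup C] [Module R C]
    (hC : IsPureInjective R C) (f : A →ₗ[R] C) (hf : Function.Injective f)
    -- `f⁺` is a precover w.r.t. the class of cotorsion right `R`-modules:
    (hdom : IsCotorsion Rᵐᵒᵖ (CharMod C))
    (hfact : ∀ (Y : Type u) [AddCommGroup Y] [Module Rᵐᵒᵖ Y], IsCotorsion Rᵐᵒᵖ Y →
      ∀ g : Y →ₗ[Rᵐᵒᵖ] CharMod A, ∃ h : Y →ₗ[Rᵐᵒᵖ] CharMod C, (charDual f).comp h = g) :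
    -- `f` is a pure injective preenvelope of `A`:
    ∀ (X : Type u) [AddCommGroup X] [Module R X], IsPureInjective R X →
      ∀ g : A →ₗ[R] X, ∃ h : C →ₗ[R] X, h.comp f = g :=
  stmt7_general f hfact
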